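/- arXiv:math/9901046 — 3 statements merged into one kernel-verified Lean document; each statement's English description precedes it below -/
import Mathlib

section
/- Let R be a commutative ring and p1(X), p2(X) two monic polynomials in C[[t]][X] such that their reductions modulo t, i.e. p1(X) mod t and p2(X) mod t in C[X], have no common roots. Then p1 and p2 generate the unit ideal in C[[t]][X] (i.e. they are coprime over C[[t]][X]). -/
/-!
The quotient `Q = ℂ[[t]][X] ⧸ (p₁, p₂)` is a finitely generated `ℂ[[t]]`-module because
`p₁` is monic, and `Q ⧸ t Q = ℂ[X] ⧸ (p̄₁, p̄₂)` vanishes because polynomials over `ℂ`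
without a common root are coprime. By Nakayama's lemma `Q = 0`, i.e. `(p₁, p₂)` is the
unit ideal. The same argument works over any ring, modulo an ideal contained in its
Jacobson radical.
-/

open Polynomial

theorem Ideal.eq_top_of_sup_map_algebraMap_eq_top {R S : Type*} [CommRing R] [CommRing S]
    [Algebra R S] {I : Ideal R} (hI : I ≤ Ideal.jacobson ⊥) {J : Ideal S}
    [Module.Finite R (S ⧸ J)] (h : J ⊔ I.map (algebraMap R S) = ⊤) : J = ⊤ := by
  have hmap : I.map (algebraMap R (S ⧸ J)) = ⊤ := by
    rw [IsScalarTower.algebraMap_eq R S (S ⧸ J), Ideal.Quotient.algebraMap_eq,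
      ← Ideal.map_map, ← bot_sup_eq (Ideal.map _ _), ← Ideal.map_quotient_self J,
      ← Ideal.map_sup, h, Ideal.map_top]
  have htop : (⊤ : Submodule R (S ⧸ J)) = ⊥ :=
    Submodule.eq_bot_of_le_smul_of_le_jacobson_bot I ⊤ Module.Finite.fg_top
      (by rw [Ideal.smul_top_eq_map, hmap]; rfl) hI
  rw [← Ideal.Quotient.subsingleton_iff]
  exact (Submodule.subsingleton_iff R).mp (subsingleton_of_bot_eq_top htop.symm)

theorem Polynomial.span_sup_map_C_ker_eq_top_of_isCoprime_map {R S : Type*} [CommRing R]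
    [CommRing S] {f : R →+* S} (hf : Function.Surjective f) {p q : R[X]}
    (h : IsCoprime (p.map f) (q.map f)) :
    Ideal.span {p} ⊔ Ideal.span {q} ⊔ (RingHom.ker f).map C = ⊤ := by
  have hmap : (Ideal.span {p} ⊔ Ideal.span {q}).map (mapRingHom f) = ⊤ := by
    rw [Ideal.map_sup, Ideal.map_span, Ideal.map_span, Set.image_singleton, Set.image_singleton]
    exact (Ideal.sup_eq_top_iff_isCoprime _ _).mpr h
  rw [← ker_mapRingHom, RingHom.ker_eq_comap_bot, ← Ideal.comap_map_of_surjective _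
    (map_surjective f hf), hmap, Ideal.comap_top]

theorem Polynomial.isCoprime_of_isCoprime_map {R S : Type*} [CommRing R] [CommRing S]
    {f : R →+* S} (hf : Function.Surjective f) (hker : RingHom.ker f ≤ Ideal.jacobson ⊥)
    {p q : R[X]} (hp : p.Monic) (h : IsCoprime (p.map f) (q.map f)) : IsCoprime p q := by
  have : Module.Finite R (R[X] ⧸ (Ideal.span {p} ⊔ Ideal.span {q})) :=
    have := hp.finite_quotient
    Module.Finite.of_surjective (Ideal.Quotient.factorₐ R le_sup_left).toLinearMap
      (Ideal.Quotient.factor_surjective le_sup_left)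
  rw [← Ideal.sup_eq_top_iff_isCoprime]
  refine Ideal.eq_top_of_sup_map_algebraMap_eq_top hker ?_
  rw [algebraMap_eq]
  exact span_sup_map_C_ker_eq_top_of_isCoprime_map hf h

theorem stmt_0_general (p₁ p₂ : Polynomial (PowerSeries ℂ))
    (h₁ : p₁.Monic)
    (h : ∀ z : ℂ, ¬((p₁.map (PowerSeries.constantCoeff : PowerSeries ℂ →+* ℂ)).IsRoot z ∧
        (p₂.map (PowerSeries.constantCoeff : PowerSeries ℂ →+* ℂ)).IsRoot z)) :
    IsCoprime p₁ p₂ := by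
  have hker :
      RingHom.ker (PowerSeries.constantCoeff : PowerSeries ℂ →+* ℂ) ≤ Ideal.jacobson ⊥ := by
    rw [PowerSeries.ker_coeff_eq_max_ideal, IsLocalRing.jacobson_eq_maximalIdeal ⊥ bot_ne_top]
  refine isCoprime_of_isCoprime_map (fun c => ⟨PowerSeries.C c, by simp⟩) hker h₁ ?_
  rw [isCoprime_iff_aeval_ne_zero_of_isAlgClosed ℂ ℂ]
  intro z
  simpa [← not_and_or] using h z

/-- Two monic polynomials over `ℂ[[t]]` whose reductions mod `t` have no common
root are coprime in `ℂ[[t]][X]`. -/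
theorem stmt_0 (p₁ p₂ : Polynomial (PowerSeries ℂ))
    (h₁ : p₁.Monic) (h₂ : p₂.Monic)
    (h : ∀ z : ℂ, ¬((p₁.map (PowerSeries.constantCoeff : PowerSeries ℂ →+* ℂ)).IsRoot z ∧
        (p₂.map (PowerSeries.constantCoeff : PowerSeries ℂ →+* ℂ)).IsRoot z)) :
    IsCoprime p₁ p₂ :=
  stmt_0_general p₁ p₂ h₁ h
end

section
/- Let g >= 1 and 0 <= d <= g-1. In the cohomology ring H^*(Sym^d(Sigma)) of the d-th symmetric product of a genus g surface, generated by classes psi_1,...,psi_{2g} of degree 1 and eta of degree 2, with relations generated by eta^r * prod_{i in I}(eta - psi_i psi_{g+i}) * prod_{j in J} psi_j * prod_{k in K} psi_{g+k} for disjoint I, J, K subsets of {1,...,g} with r + 2|I| + |J| + |K| >= d+1, the element R_k := sum_{i=0}^{alpha} [C(d-k-alpha+1, i) / C(g-k, i)] * (-theta)^i / i! * eta^{alpha - i}, with alpha = floor((d-k)/2) + 1 and theta = sum_i psi_i psi_{g+i}, satisfies: psi_1 ... psi_k * R_k = 0 in H^*(Sym^d(Sigma)) for 0 <= k <= d. 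-/
/-!
Put `x j = ψ j ψ' j` and `P = ψ₁ ⋯ ψ_k`. The `x j` square to zero and commute with each other,
with `η` and with `P`, and `P x j = 0` for `j < k`; so everything happens in the commutative
subalgebra generated by `η`, `P` and the `x j`, where `P θ = P θ_C` for `θ_C` the sum of the
`x j` over the remaining `m = g - k` indices `C`. As the `x j` square to zero,
`θ_C^i = i! ∑_{|T| = i} ∏_{j∈T} x j`; expanding `∏_{j∈S} (η - x j)` and counting the `s`-subsets
of `C` containing a given `T` (`C(m,s) C(s,t) = C(m,t) C(m-t,s-t)`) then shows, with
`s = d - k - α + 1`,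
  `R_k = C(m,s)⁻¹ ∑_{S ⊆ C, |S| = s} η^(α-s) ∏_{j∈S} (η - x j)`.
`P` kills every summand: it is the relation with `r = α - s`, `I = S`, `J = {1, …, k}`, `K = ∅`,
for which `r + 2|I| + |J| + |K| = α + s + k ≥ d + 1`.
-/

open Finset Nat

theorem List.prod_map_mul_eq_zero_of_mem {ι M : Type*} [MonoidWithZero M] {f : ι → M} {b : M}
    {l : List ι} {j : ι} (hb : ∀ i ∈ l, Commute b (f i)) (hj : j ∈ l) (hjb : f j * b = 0) :
    (l.map f).prod * b = 0 := by
  obtain ⟨l₁, l₂, rfl⟩ := List.append_of_mem hj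
  have hcomm : Commute b (l₂.map f).prod :=
    Commute.list_prod_right _ _ fun y hy => by
      obtain ⟨i, hi, rfl⟩ := List.mem_map.1 hy
      exact hb i (by simp [hi])
  rw [List.map_append, List.prod_append, List.map_cons, List.prod_cons, mul_assoc, mul_assoc,
    ← hcomm.eq, ← mul_assoc (f j), hjb, zero_mul, mul_zero]

theorem Finset.prod_map_sort {ι M : Type*} [CommMonoid M] (r : ι → ι → Prop) [DecidableRel r]
    [IsTrans ι r] [Std.Antisymm r] [Std.Total r] (s : Finset ι) (f : ι → M) :
    ((s.sort r).map f).prod = ∏ i ∈ s, f i := by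
  rw [← Multiset.prod_coe, ← Multiset.map_coe, Finset.sort_eq]
  rfl

theorem eq_zero_of_eq_neg (K : Type*) {M : Type*} [DivisionRing K] [CharZero K] [AddCommGroup M]
    [Module K M] {v : M} (h : v = -v) : v = 0 := by
  have h2 : (2 : K) • v = 0 := by
    rw [two_smul]
    nth_rw 1 [h]
    exact neg_add_cancel v
  exact (smul_eq_zero.1 h2).resolve_left two_ne_zero

theorem commute_mul_of_anticommute {A : Type*} [Ring A] {a b c : A} (ha : a * c = -(c * a))
    (hb : b * c = -(c * b)) : Commute (a * b) c := by
  rw [Commute, SemiconjBy, mul_assoc, hb, mul_neg, ← mul_assoc, ha, neg_mul, neg_neg, mul_assoc]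

theorem mul_pow_eq_mul_pow_of_mul_eq {R : Type*} [CommMonoid R] {p a b : R} (h : p * a = p * b) :
    ∀ n : ℕ, p * a ^ n = p * b ^ n
  | 0 => by simp
  | n + 1 => by
    rw [pow_succ, pow_succ, ← mul_assoc, mul_pow_eq_mul_pow_of_mul_eq h n, mul_right_comm, h,
      mul_right_comm, mul_assoc]

namespace Finset

variable {ι : Type*} [DecidableEq ι]

theorem sum_powersetCard_sum_powersetCard {M : Type*} [AddCommMonoid M] (C : Finset ι)
    {s t : ℕ} (hts : t ≤ s) (f : Finset ι → M) :
    ∑ S ∈ C.powersetCard s, ∑ T ∈ S.powersetCard t, f T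
      = (#C - t).choose (s - t) • ∑ T ∈ C.powersetCard t, f T := by
  have hswap : ∀ S T, S ∈ C.powersetCard s ∧ T ∈ S.powersetCard t ↔
      S ∈ (C.powersetCard s).filter (T ⊆ ·) ∧ T ∈ C.powersetCard t := by
    simp only [mem_powersetCard, mem_filter]
    exact fun S T => ⟨fun ⟨hS, hTS, hT⟩ => ⟨⟨hS, hTS⟩, hTS.trans hS.1, hT⟩,
      fun ⟨⟨hS, hTS⟩, _, hT⟩ => ⟨hS, hTS, hT⟩⟩
  rw [sum_comm' hswap, smul_sum]
  refine sum_congr rfl fun T hT => ?_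
  obtain ⟨hTC, rfl⟩ := mem_powersetCard.1 hT
  rw [sum_const, card_filter_powersetCard_subset T C s hTC hts]

theorem sum_powersetCard_sum_sdiff_insert {M : Type*} [AddCommMonoid M] (C : Finset ι) (i : ℕ)
    (F : Finset ι → M) :
    ∑ T ∈ C.powersetCard i, ∑ j ∈ C \ T, F (insert j T)
      = (i + 1) • ∑ U ∈ C.powersetCard (i + 1), F U := by
  have hcard : ∀ U ∈ C.powersetCard (i + 1), (i + 1) • F U = ∑ _j ∈ U, F U := fun U hU => by
    rw [sum_const, (mem_powersetCard.1 hU).2]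
  rw [smul_sum, sum_congr rfl hcard, sum_sigma', sum_sigma']
  refine sum_nbij' (fun p => ⟨insert p.2 p.1, p.2⟩) (fun q => ⟨q.1.erase q.2, q.2⟩)
    ?_ ?_ ?_ ?_ fun _ _ => rfl
  · rintro ⟨T, j⟩ h
    simp only [mem_sigma, mem_powersetCard, mem_sdiff] at h ⊢
    exact ⟨⟨insert_subset h.2.1 h.1.1, by rw [card_insert_of_notMem h.2.2, h.1.2]⟩,
      mem_insert_self _ _⟩
  · rintro ⟨U, j⟩ h
    simp only [mem_sigma, mem_powersetCard, mem_sdiff] at h ⊢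
    exact ⟨⟨(erase_subset _ _).trans h.1.1, by rw [card_erase_of_mem h.2, h.1.2]; rfl⟩,
      h.1.1 h.2, notMem_erase _ _⟩
  · rintro ⟨T, j⟩ h
    simp only [mem_sigma, mem_sdiff] at h
    simp [erase_insert h.2.2]
  · rintro ⟨U, j⟩ h
    simp only [mem_sigma] at h
    simp [insert_erase h.2]

theorem sum_powersetCard_prod_mul_sum {R : Type*} [CommSemiring R] (C : Finset ι) {x : ι → R}
    (hx : ∀ j ∈ C, x j * x j = 0) (i : ℕ) :
    (∑ T ∈ C.powersetCard i, ∏ j ∈ T, x j) * ∑ j ∈ C, x j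
      = (i + 1) • ∑ U ∈ C.powersetCard (i + 1), ∏ j ∈ U, x j := by
  rw [← sum_powersetCard_sum_sdiff_insert, sum_mul]
  refine sum_congr rfl fun T hT => ?_
  have hTC := (mem_powersetCard.1 hT).1
  have hsq : ∀ j ∈ T, (∏ k ∈ T, x k) * x j = 0 := fun j hj => by
    rw [← mul_prod_erase T x hj, mul_right_comm, hx j (hTC hj), zero_mul]
  rw [mul_sum, ← sum_sdiff hTC, sum_eq_zero hsq, add_zero]
  exact sum_congr rfl fun j hj => by rw [prod_insert (mem_sdiff.1 hj).2, mul_comm]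

theorem sum_pow_eq_factorial_nsmul_sum_powersetCard {R : Type*} [CommSemiring R] (C : Finset ι)
    {x : ι → R} (hx : ∀ j ∈ C, x j * x j = 0) (i : ℕ) :
    (∑ j ∈ C, x j) ^ i = i ! • ∑ T ∈ C.powersetCard i, ∏ j ∈ T, x j := by
  induction i with
  | zero => simp
  | succ i ih =>
    rw [pow_succ, ih, smul_mul_assoc, sum_powersetCard_prod_mul_sum C hx, smul_smul,
      factorial_succ, mul_comm]

theorem prod_sub_eq_sum_powersetCard {R : Type*} [CommRing R] (S : Finset ι) (e : R)
    (x : ι → R) :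
    ∏ j ∈ S, (e - x j)
      = ∑ t ∈ range (#S + 1), ((-1) ^ t * e ^ (#S - t)) * ∑ T ∈ S.powersetCard t, ∏ j ∈ T, x j := by
  simp_rw [sub_eq_neg_add, prod_add, prod_const, sum_powerset, mul_sum]
  refine sum_congr rfl fun t _ => sum_congr rfl fun T hT => ?_
  obtain ⟨hTS, rfl⟩ := mem_powersetCard.1 hT
  rw [prod_neg, card_sdiff_of_subset hTS]
  ring

end Finset

theorem choose_div_choose_eq (K : Type*) [Field K] [CharZero K] {m s t : ℕ} (hts : t ≤ s)
    (hsm : s ≤ m) :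
    (s.choose t / m.choose t : K) = (m - t).choose (s - t) / m.choose s := by
  have h : (m.choose s * s.choose t : K) = m.choose t * (m - t).choose (s - t) := by
    exact_mod_cast Nat.choose_mul hts
  rw [div_eq_div_iff (by exact_mod_cast (choose_pos (hts.trans hsm)).ne')
    (by exact_mod_cast (choose_pos hsm).ne')]
  linear_combination h

section Macdonald

variable (K : Type*) [Field K]

/-- The element `R_k` of the statement, with `m = g - k` and `s = d - k - α + 1`. -/
def macdonaldSum {R : Type*} [Ring R] [Algebra K R] (m s a : ℕ) (θ e : R) : R :=
  ∑ i ∈ range (a + 1), ((s.choose i / m.choose i : K) * ((-1) ^ i / (i ! : K))) •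
    (θ ^ i * e ^ (a - i))

variable [CharZero K]

theorem macdonaldSum_eq_inv_choose_smul_sum_prod_sub {ι R : Type*} [DecidableEq ι] [CommRing R]
    [Algebra K R] (C : Finset ι) {x : ι → R} (hx : ∀ j ∈ C, x j * x j = 0) (e : R) {s a : ℕ}
    (hsa : s ≤ a) (hsC : s ≤ #C) :
    macdonaldSum K #C s a (∑ j ∈ C, x j) e
      = ((#C).choose s : K)⁻¹ • ∑ S ∈ C.powersetCard s, e ^ (a - s) * ∏ j ∈ S, (e - x j) := by
  set E : ℕ → R := fun t => ∑ T ∈ C.powersetCard t, ∏ j ∈ T, x j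
  have hL : macdonaldSum K #C s a (∑ j ∈ C, x j) e
      = ∑ t ∈ range (s + 1),
          ((s.choose t / (#C).choose t : K) * (-1) ^ t) • (E t * e ^ (a - t)) := by
    refine (sum_subset (range_subset_range.2 (by omega)) fun i _ hi => ?_).symm.trans
      (sum_congr rfl fun i _ => ?_)
    · rw [choose_eq_zero_of_lt (by simpa using hi)]
      simp
    · rw [sum_pow_eq_factorial_nsmul_sum_powersetCard C hx, ← Nat.cast_smul_eq_nsmul K,
        smul_mul_assoc, smul_smul]
      congr 1
      rw [mul_assoc, div_mul_cancel₀ _ (Nat.cast_ne_zero.2 i.factorial_ne_zero)]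
  have hR : ∑ S ∈ C.powersetCard s, e ^ (a - s) * ∏ j ∈ S, (e - x j)
      = ∑ t ∈ range (s + 1), ((-1) ^ t * e ^ (a - t)) * ((#C - t).choose (s - t) • E t) := by
    calc ∑ S ∈ C.powersetCard s, e ^ (a - s) * ∏ j ∈ S, (e - x j)
        = ∑ S ∈ C.powersetCard s, ∑ t ∈ range (s + 1),
            ((-1) ^ t * e ^ (a - t)) * ∑ T ∈ S.powersetCard t, ∏ j ∈ T, x j := by
          refine sum_congr rfl fun S hS => ?_
          rw [prod_sub_eq_sum_powersetCard, (mem_powersetCard.1 hS).2, mul_sum]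
          refine sum_congr rfl fun t ht => ?_
          rw [← mul_assoc, mul_left_comm, ← pow_add,
            Nat.sub_add_sub_cancel hsa (by simpa [Nat.lt_succ_iff] using ht)]
      _ = ∑ t ∈ range (s + 1), ((-1) ^ t * e ^ (a - t)) * ((#C - t).choose (s - t) • E t) := by
          rw [sum_comm]
          refine sum_congr rfl fun t ht => ?_
          rw [← mul_sum, sum_powersetCard_sum_powersetCard C (by simpa [Nat.lt_succ_iff] using ht)]
  rw [hL, hR, smul_sum]
  refine sum_congr rfl fun t ht => ?_
  rw [choose_div_choose_eq K (by simpa [Nat.lt_succ_iff] using ht) hsC, div_eq_inv_mul]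
  simp only [Algebra.smul_def, map_mul, map_pow, map_neg, map_one, map_natCast, eq_natCast]
  ring

theorem mul_macdonaldSum_eq_zero {ι R : Type*} [DecidableEq ι] [Fintype ι] [CommRing R]
    [Algebra K R] (C : Finset ι) {x : ι → R} (hx : ∀ j ∈ C, x j * x j = 0) {e p : R}
    (hp : ∀ j ∉ C, p * x j = 0) {s a : ℕ} (hsa : s ≤ a) (hsC : s ≤ #C)
    (hrel : ∀ S ∈ C.powersetCard s, p * (e ^ (a - s) * ∏ j ∈ S, (e - x j)) = 0) :
    p * macdonaldSum K #C s a (∑ j, x j) e = 0 := by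
  have hθ : p * ∑ j, x j = p * ∑ j ∈ C, x j := by
    rw [← sum_add_sum_compl C, mul_add, mul_sum Cᶜ,
      sum_eq_zero fun j hj => hp j (mem_compl.1 hj), add_zero]
  have hθC : p * macdonaldSum K #C s a (∑ j, x j) e
      = p * macdonaldSum K #C s a (∑ j ∈ C, x j) e := by
    simp_rw [macdonaldSum, mul_sum, mul_smul_comm, ← mul_assoc, mul_pow_eq_mul_pow_of_mul_eq hθ]
  rw [hθC, macdonaldSum_eq_inv_choose_smul_sum_prod_sub K C hx e hsa hsC, mul_smul_comm, mul_sum,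
    sum_eq_zero hrel, smul_zero]

theorem mul_macdonaldSum_eq_zero_of_commute {ι A : Type*} [LinearOrder ι] [Fintype ι] [Ring A]
    [Algebra K A] (C : Finset ι) {x : ι → A} {e p : A} (hxx : ∀ i j, Commute (x i) (x j))
    (hex : ∀ j, Commute e (x j)) (hpx : ∀ j, Commute p (x j)) (hep : Commute e p)
    (hx : ∀ j ∈ C, x j * x j = 0) (hp : ∀ j ∉ C, p * x j = 0) {s a : ℕ} (hsa : s ≤ a)
    (hsC : s ≤ #C)
    (hrel : ∀ S ∈ C.powersetCard s,
      e ^ (a - s) * ((S.sort (· ≤ ·)).map fun j => e - x j).prod * p = 0) :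
    p * macdonaldSum K #C s a (∑ j, x j) e = 0 := by
  have hG : ∀ u ∈ insert e (insert p (Set.range x)), ∀ v ∈ insert e (insert p (Set.range x)),
      u * v = v * u := by
    rintro u (rfl | rfl | ⟨i, rfl⟩) v (rfl | rfl | ⟨j, rfl⟩)
    exacts [rfl, hep.eq, (hex j).eq, hep.eq.symm, rfl, (hpx j).eq, (hex i).eq.symm,
      (hpx i).eq.symm, (hxx i j).eq]
  let B := Algebra.adjoin K (insert e (insert p (Set.range x)))
  have : IsMulCommutative B := Algebra.isMulCommutative_adjoin K hG
  let : CommRing B := open scoped IsMulCommutative in inferInstance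
  let e' : B := ⟨e, Algebra.subset_adjoin (by simp)⟩
  let p' : B := ⟨p, Algebra.subset_adjoin (by simp)⟩
  let x' : ι → B := fun j => ⟨x j, Algebra.subset_adjoin (by simp)⟩
  have hrel' : ∀ S ∈ C.powersetCard s, p' * (e' ^ (a - s) * ∏ j ∈ S, (e' - x' j)) = 0 :=
    fun S hS => by
      rw [mul_comm, ← prod_map_sort (· ≤ ·)]
      exact Subtype.ext (by simpa [Function.comp_def, e', x', p'] using hrel S hS)
  have key := mul_macdonaldSum_eq_zero K C (x := x') (fun j hj => Subtype.ext (hx j hj))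
    (fun j hj => Subtype.ext (hp j hj)) hsa hsC hrel'
  simpa [macdonaldSum] using congrArg Subtype.val key

end Macdonald

/-- Macdonald's relation `ψ₁ ⋯ ψ_k · R_k = 0` in `H^*(Sym^d Σ)`: in any
`ℂ`-algebra with anticommuting degree-one generators `ψ, ψ'`, a central element
`η`, and the Macdonald relations
`η^r ∏_{i∈I}(η - ψᵢψ'ᵢ) ∏_{j∈J} ψⱼ ∏_{k∈K} ψ'ₖ = 0` for disjoint `I,J,K` with
`r + 2|I| + |J| + |K| ≥ d+1`, the element
`R_k = ∑_{i=0}^{α} [C(d-k-α+1,i)/C(g-k,i)] (-θ)^i/i! · η^{α-i}`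
(`α = ⌊(d-k)/2⌋+1`, `θ = ∑ ψᵢψ'ᵢ`) satisfies `ψ₁ ⋯ ψ_k · R_k = 0` for
`0 ≤ k ≤ d`. -/
theorem stmt_4 (g d : ℕ) (hg : 1 ≤ g) (hd : d ≤ g - 1)
    (A : Type*) [Ring A] [Algebra ℂ A]
    (ψ ψ' : Fin g → A) (η : A)
    (hη : ∀ a : A, η * a = a * η)
    (hanti₁ : ∀ i j, ψ i * ψ j = - (ψ j * ψ i))
    (hanti₂ : ∀ i j, ψ' i * ψ' j = - (ψ' j * ψ' i))
    (hanti₃ : ∀ i j, ψ i * ψ' j = - (ψ' j * ψ i))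
    (hrel : ∀ (r : ℕ) (I J K : Finset (Fin g)),
      Disjoint I J → Disjoint I K → Disjoint J K →
      d + 1 ≤ r + 2 * I.card + J.card + K.card →
      η ^ r * ((I.sort (· ≤ ·)).map (fun i => η - ψ i * ψ' i)).prod *
        ((J.sort (· ≤ ·)).map ψ).prod * ((K.sort (· ≤ ·)).map ψ').prod = 0) :
    ∀ k : ℕ, k ≤ d →
      (((Finset.univ.filter (fun i : Fin g => (i : ℕ) < k)).sort (· ≤ ·)).map ψ).prod *
        (∑ i ∈ Finset.range (((d - k) / 2 + 1) + 1),
          ((((d - k - ((d - k) / 2 + 1) + 1).choose i : ℂ) / (((g - k).choose i : ℂ))) *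
              ((-1) ^ i / (i.factorial : ℂ))) •
            ((∑ j : Fin g, ψ j * ψ' j) ^ i * η ^ ((d - k) / 2 + 1 - i))) = 0 := by
  intro k hk
  set a := (d - k) / 2 + 1 with ha
  set s := d - k - a + 1 with hs
  set J := univ.filter fun i : Fin g => (i : ℕ) < k
  set x : Fin g → A := fun j => ψ j * ψ' j
  have hψ : ∀ j, ψ j * ψ j = 0 := fun j => eq_zero_of_eq_neg ℂ (hanti₁ j j)
  have hxψ : ∀ i j, Commute (x j) (ψ i) := fun i j =>
    commute_mul_of_anticommute (hanti₁ j i) (by rw [hanti₃, neg_neg])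
  have hxψ' : ∀ i j, Commute (x j) (ψ' i) := fun i j =>
    commute_mul_of_anticommute (hanti₃ j i) (hanti₂ j i)
  have hPx : ∀ j, Commute ((J.sort (· ≤ ·)).map ψ).prod (x j) := fun j =>
    (Commute.list_prod_right _ _ fun y hy => by
      obtain ⟨i, -, rfl⟩ := List.mem_map.1 hy
      exact hxψ i j).symm
  have hcard : #Jᶜ = g - k := by
    rw [card_compl, Fintype.card_fin, Fin.card_filter_val_lt, min_eq_right (by omega)]
  have hsC : s ≤ #Jᶜ := by omega
  rw [← hcard]
  refine mul_macdonaldSum_eq_zero_of_commute ℂ Jᶜ (fun i j => (hxψ j i).mul_right (hxψ' j i))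
    (fun j => hη _) hPx (hη _) (fun j _ => ?_) (fun j hj => ?_) (by omega) hsC fun S hS => ?_
  · rw [← mul_assoc, (hxψ j j).eq, mul_assoc, mul_assoc, ← mul_assoc (ψ j), hψ, zero_mul]
  · refine List.prod_map_mul_eq_zero_of_mem (j := j) (fun i _ => hxψ i j) ((mem_sort _).2 ?_) ?_
    · simpa using hj
    · rw [← mul_assoc, hψ, zero_mul]
  · obtain ⟨hSJ, hScard⟩ := mem_powersetCard.1 hS
    simpa using hrel (a - s) S J ∅ (subset_compl_iff_disjoint_right.1 hSJ)
      (disjoint_empty_right _) (disjoint_empty_right _)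
      (by rw [hScard, Fin.card_filter_val_lt, card_empty, min_eq_right (by omega)]; omega)
end

section
/- Let m >= 1 and let A be a commutative C[[t]]-algebra, free of finite rank as a C[[t]]-module, with elements beta, gamma such that gamma^m = 0, the monomials beta^i gamma^j with 2i + j < m form a C[[t]]-basis, and for each s with 0 <= s < m there is a relation gamma^s * beta^{d_s + 1} = sum over {2i + j < m - s, i + j >= d_s + 1, j > 0} of c_{ij} beta^i gamma^{j+s} with c_{ij} in C[[t]], where d_s = floor((m - s - 1)/2). Then beta^{n} gamma^{p} = 0 in A whenever n + p >= m. -/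
/-! If `γ ^ s * β ^ e s` is a combination of monomials of no smaller total degree and strictly
larger `γ`-exponent, then a monomial `β ^ n * γ ^ p` of total degree at least `m` with
`e p ≤ n` can be rewritten as a combination of monomials of total degree at least `m` with
larger `γ`-exponent. Iterating this, the `γ`-exponent eventually reaches `m`, where `γ ^ m = 0`. -/

theorem pow_mul_pow_eq_zero_of_mem_span {A : Type*} [CommSemiring A] {β γ : A} {m : ℕ}
    (hγ : γ ^ m = 0) (e : ℕ → ℕ) (he : ∀ s < m, e s ≤ m - s)
    (hrel : ∀ s < m, γ ^ s * β ^ e s ∈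
      Ideal.span {x | ∃ i j, e s ≤ i + j ∧ 0 < j ∧ x = β ^ i * γ ^ (j + s)}) :
    ∀ n p, m ≤ n + p → β ^ n * γ ^ p = 0 := by
  intro n p hnp
  induction hk : m - p using Nat.strong_induction_on generalizing n p with
  | _ k ih =>
    obtain hmp | hpm := le_or_gt m p
    · rw [pow_eq_zero_of_le hmp hγ, mul_zero]
    have hen : e p ≤ n := by have := he p hpm; omega
    have hspan_ker : Ideal.span {x | ∃ i j, e p ≤ i + j ∧ 0 < j ∧ x = β ^ i * γ ^ (j + p)} ≤
        LinearMap.ker (LinearMap.mulLeft A (β ^ (n - e p))) := by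
      refine Ideal.span_le.mpr ?_
      rintro _ ⟨i, j, hij, hj, rfl⟩
      rw [SetLike.mem_coe, LinearMap.mem_ker, LinearMap.mulLeft_apply, ← mul_assoc, ← pow_add]
      exact ih (m - (j + p)) (by omega) _ _ (by omega) rfl
    have hsplit : β ^ n * γ ^ p = β ^ (n - e p) * (γ ^ p * β ^ e p) := by
      rw [mul_comm (γ ^ p), ← mul_assoc, ← pow_add, Nat.sub_add_cancel hen]
    rw [hsplit]
    exact hspan_ker (hrel p hpm)

theorem stmt_15_general (m : ℕ) (A : Type*) [CommRing A]
    [Algebra (PowerSeries ℂ) A]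
    (β γ : A) (hγ : γ ^ m = 0)
    (hrel : ∀ s, s < m → ∃ c : ℕ → ℕ → PowerSeries ℂ,
      γ ^ s * β ^ ((m - s - 1) / 2 + 1) =
        ∑ p ∈ (Finset.range m ×ˢ Finset.range m).filter
            (fun p => 2 * p.1 + p.2 < m - s ∧ (m - s - 1) / 2 + 1 ≤ p.1 + p.2 ∧ 0 < p.2),
          c p.1 p.2 • (β ^ p.1 * γ ^ (p.2 + s))) :
    ∀ n p : ℕ, m ≤ n + p → β ^ n * γ ^ p = 0 := by
  refine pow_mul_pow_eq_zero_of_mem_span hγ (fun s => (m - s - 1) / 2 + 1) (fun s hs => by omega)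
    fun s hs => ?_
  obtain ⟨c, hc⟩ := hrel s hs
  rw [hc]
  refine Ideal.sum_mem _ fun q hq => Submodule.smul_of_tower_mem _ _ (Ideal.subset_span ?_)
  obtain ⟨-, -, hdeg, hpos⟩ := Finset.mem_filter.mp hq
  exact ⟨q.1, q.2, hdeg, hpos, rfl⟩

/-- Fukaya–Floer nilpotency bound (Corollary 3.4): over `ℂ[[t]]`, with
`γ^m = 0`, basis `β^i γ^j` (`2i + j < m`) and relations
`γ^s β^{d_s+1} = ∑ c_{ij} β^i γ^{j+s}` over `2i+j < m-s`, `i+j ≥ d_s+1`,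
`j > 0`, where `d_s = ⌊(m-s-1)/2⌋`, any monomial `β^n γ^p` with
`n + p ≥ m` vanishes. -/
theorem stmt_15 (m : ℕ) (hm : 1 ≤ m) (A : Type*) [CommRing A]
    [Algebra (PowerSeries ℂ) A]
    [Module.Free (PowerSeries ℂ) A] [Module.Finite (PowerSeries ℂ) A]
    (β γ : A) (hγ : γ ^ m = 0)
    (hbasis : ∃ b : Module.Basis {q : ℕ × ℕ // 2 * q.1 + q.2 < m} (PowerSeries ℂ) A,
      ∀ q, b q = β ^ q.val.1 * γ ^ q.val.2)
    (hrel : ∀ s, s < m → ∃ c : ℕ → ℕ → PowerSeries ℂ,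
      γ ^ s * β ^ ((m - s - 1) / 2 + 1) =
        ∑ p ∈ (Finset.range m ×ˢ Finset.range m).filter
            (fun p => 2 * p.1 + p.2 < m - s ∧ (m - s - 1) / 2 + 1 ≤ p.1 + p.2 ∧ 0 < p.2),
          c p.1 p.2 • (β ^ p.1 * γ ^ (p.2 + s))) :
    ∀ n p : ℕ, m ≤ n + p → β ^ n * γ ^ p = 0 :=
  stmt_15_general m A β γ hγ hrel
end
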